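/- arXiv:1811.01432 — 4 statements merged into one kernel-verified Lean document; each statement's English description precedes it below -/
import Mathlib

section
/- For the Curie-Weiss free energy F_N(t,h) = (1/N) log Σ_{σ∈{±1}^N} 2^{-N} exp((t/N) Σ_{i,j} σ_i σ_j + h Σ_i σ_i), the identity ∂_t F_N - (∂_h F_N)^2 = (1/N) ∂_h^2 F_N holds for all t ≥ 0 and h ∈ ℝ. -/
open Finset

/-- Spin value of a Boolean configuration entry: `±1`. -/
noncomputable def spin (b : Bool) : ℝ := if b then 1 else -1

/-- Curie-Weiss free energy
`F_N(t,h) = (1/N) log Σ_{σ∈{±1}^N} 2^{-N} exp((t/N) Σ_{i,j} σ_i σ_j + h Σ_i σ_i)`. -/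
noncomputable def cwF (N : ℕ) (t h : ℝ) : ℝ :=
  (1 / N) * Real.log (∑ σ : Fin N → Bool,
    (2 : ℝ) ^ (-(N : ℤ)) *
      Real.exp ((t / N) * ∑ i, ∑ j, spin (σ i) * spin (σ j) + h * ∑ i, spin (σ i)))

/-!
The partition function `Z(t, h) = Σ_σ 2^{-N} exp((t/N) m_σ² + h m_σ)`, with `m_σ` the
magnetization, solves the heat equation `∂_t Z = (1/N) ∂_h² Z`, because each summand does.
The Cole–Hopf transform `F = (1/N) log Z` of a positive solution of this heat equation satisfies
the viscous Hamilton–Jacobi equation `∂_t F - (∂_h F)² = (1/N) ∂_h² F`.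
-/

open Real

theorem coleHopf_hamiltonJacobi {Z : ℝ → ℝ → ℝ} {Z' : ℝ → ℝ} {c t h Z'' : ℝ}
    (hpos : ∀ h', 0 < Z t h') (hZ' : ∀ h', HasDerivAt (Z t) (Z' h') h')
    (hZ'' : HasDerivAt Z' Z'' h) (heat : HasDerivAt (fun t' => Z t' h) (c * Z'') t) :
    deriv (fun t' => c * log (Z t' h)) t - deriv (fun h' => c * log (Z t h')) h ^ 2
      = c * deriv (fun h' => deriv (fun h'' => c * log (Z t h'')) h') h := by
  have hF : ∀ h', HasDerivAt (fun h'' => c * log (Z t h'')) (c * (Z' h' / Z t h')) h' :=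
    fun h' => ((hZ' h').log (hpos h').ne').const_mul c
  have hF' : deriv (fun h' => deriv (fun h'' => c * log (Z t h'')) h') h
      = c * ((Z'' * Z t h - Z' h * Z' h) / Z t h ^ 2) := by
    simp only [fun h' => (hF h').deriv]
    exact ((hZ''.div (hZ' h) (hpos h).ne').const_mul c).deriv
  rw [((heat.log (hpos h).ne').const_mul c).deriv, (hF h).deriv, hF']
  field_simp [(hpos h).ne']

namespace CurieWeiss

section TiltedMoment

variable {ι : Type*} [Fintype ι] (w m : ι → ℝ) (c : ℝ)

noncomputable def tiltedMoment (k : ℕ) (t h : ℝ) : ℝ :=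
  ∑ i, w i * m i ^ k * exp (c * t * m i ^ 2 + h * m i)

theorem hasDerivAt_tiltedMoment_field (k : ℕ) (t h : ℝ) :
    HasDerivAt (tiltedMoment w m c k t) (tiltedMoment w m c (k + 1) t h) h := by
  refine HasDerivAt.fun_sum fun i _ => ?_
  have hexp := ((hasDerivAt_mul_const (x := h) (m i)).const_add (c * t * m i ^ 2)).exp
  exact (hexp.const_mul (w i * m i ^ k)).congr_deriv (by ring)

theorem hasDerivAt_tiltedMoment_time (k : ℕ) (t h : ℝ) :
    HasDerivAt (fun t' => tiltedMoment w m c k t' h) (c * tiltedMoment w m c (k + 2) t h) t := by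
  rw [tiltedMoment, mul_sum]
  refine HasDerivAt.fun_sum fun i _ => ?_
  have hexp := ((((hasDerivAt_id' t).const_mul c).mul_const (m i ^ 2)).add_const (h * m i)).exp
  exact (hexp.const_mul (w i * m i ^ k)).congr_deriv (by ring)

theorem tiltedMoment_zero_pos [Nonempty ι] (hw : ∀ i, 0 < w i) (t h : ℝ) :
    0 < tiltedMoment w m c 0 t h :=
  sum_pos (fun i _ => by simpa using mul_pos (hw i) (exp_pos _)) univ_nonempty

end TiltedMoment

noncomputable def magnetization {N : ℕ} (σ : Fin N → Bool) : ℝ := ∑ i, spin (σ i)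

theorem cwF_eq_log_tiltedMoment (N : ℕ) (t h : ℝ) :
    cwF N t h = 1 / N * log
      (tiltedMoment (fun _ : Fin N → Bool => (2 : ℝ) ^ (-(N : ℤ))) magnetization (1 / N) 0 t h) := by
  unfold cwF tiltedMoment magnetization
  congr 2
  refine sum_congr rfl fun σ _ => ?_
  rw [← sum_mul_sum]
  ring_nf

end CurieWeiss

open CurieWeiss in
theorem curieWeiss_hamilton_jacobi_general (N : ℕ) (t h : ℝ) :
    deriv (fun t' => cwF N t' h) t - (deriv (fun h' => cwF N t h') h) ^ 2
      = (1 / N) * deriv (fun h' => deriv (fun h'' => cwF N t h'') h') h := by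
  simp only [cwF_eq_log_tiltedMoment]
  exact coleHopf_hamiltonJacobi
    (fun h' => tiltedMoment_zero_pos _ _ _ (fun _ => zpow_pos two_pos _) t h')
    (fun h' => hasDerivAt_tiltedMoment_field _ _ _ 0 t h')
    (hasDerivAt_tiltedMoment_field _ _ _ 1 t h) (hasDerivAt_tiltedMoment_time _ _ _ 0 t h)

/-- The Curie-Weiss free energy satisfies the exact Hamilton-Jacobi equation with
viscosity parameter `1/N`: `∂_t F_N - (∂_h F_N)^2 = (1/N) ∂_h^2 F_N` for all `t ≥ 0, h ∈ ℝ`. -/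
theorem curieWeiss_hamilton_jacobi (N : ℕ) (hN : 1 ≤ N) (t h : ℝ) (ht : 0 ≤ t) :
    deriv (fun t' => cwF N t' h) t - (deriv (fun h' => cwF N t h') h) ^ 2
      = (1 / N) * deriv (fun h' => deriv (fun h'' => cwF N t h'') h') h :=
  curieWeiss_hamilton_jacobi_general N t h
end

section
/- Gaussian Poincaré inequality: if Z ~ N(0,1) and f ∈ C^1(ℝ) with f and f' in L²(γ) where γ is the standard Gaussian measure, then Var(f(Z)) ≤ E[(f'(Z))²]. -/
open MeasureTheory ProbabilityTheory Set Filter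
open scoped ENNReal NNReal Interval

/-!
Write `Var f = ½ E[(f X - f Y)²]` with `X, Y` independent copies, and bound
`(f x - f y)² ≤ |x - y| ∫_{Ι y x} f'²` by Cauchy–Schwarz. Exchanging the order of integration,
`f'(s)²` gets the weight `E[|X - Y|; s ∈ Ι Y X]`, which for any integrable law equals
`2 ∫_{[s, ∞)} (x - E X) dμ(x)`. For the standard Gaussian this is `2 φ(s)`, since `(-φ)' = x φ`,
so `Var f ≤ ∫ f'(s)² φ(s) ds = E[f'(Z)²]`.
-/

theorem integral_sq_sub_sq_integral_eq_half_integral_prod {Ω : Type*} [MeasurableSpace Ω]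
    {μ : Measure Ω} [IsProbabilityMeasure μ] {f : Ω → ℝ} (hf : MemLp f 2 μ) :
    ∫ x, f x ^ 2 ∂μ - (∫ x, f x ∂μ) ^ 2 = (∫ p, (f p.1 - f p.2) ^ 2 ∂μ.prod μ) / 2 := by
  have hf1 : Integrable f μ := hf.integrable one_le_two
  have hf2 : Integrable (fun x => f x ^ 2) μ := hf.integrable_sq
  have hexpand : ∀ p : Ω × Ω, (f p.1 - f p.2) ^ 2 = f p.1 ^ 2 + f p.2 ^ 2 - 2 * (f p.1 * f p.2) :=
    fun p => by ring
  have hsum : Integrable (fun p : Ω × Ω => f p.1 ^ 2 + f p.2 ^ 2) (μ.prod μ) :=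
    (hf2.comp_fst μ).add (hf2.comp_snd μ)
  rw [integral_congr_ae (ae_of_all _ hexpand),
    integral_sub hsum ((hf1.mul_prod hf1).const_mul 2),
    integral_add (hf2.comp_fst μ) (hf2.comp_snd μ), integral_const_mul, integral_prod_mul,
    integral_fun_fst (fun x => f x ^ 2), integral_fun_snd (fun x => f x ^ 2)]
  simp only [probReal_univ, one_smul]
  ring

theorem sq_setIntegral_le_measureReal_mul_setIntegral_sq {α : Type*} [MeasurableSpace α]
    {μ : Measure α} {s : Set α} (hs : μ s ≠ ∞) {g : α → ℝ} (hg : IntegrableOn g s μ)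
    (hg2 : IntegrableOn (fun x => g x ^ 2) s μ) :
    (∫ x in s, g x ∂μ) ^ 2 ≤ μ.real s * ∫ x in s, g x ^ 2 ∂μ := by
  rcases eq_or_ne (μ s) 0 with h0 | h0
  · simp [Measure.restrict_eq_zero.2 h0]
  have hjensen := even_two.convexOn_pow.map_set_average_le (continuous_pow 2).continuousOn
    isClosed_univ h0 hs (by simp) hg hg2
  rw [setAverage_eq, setAverage_eq, smul_eq_mul, smul_eq_mul, mul_pow] at hjensen
  have hpos : 0 < μ.real s := ENNReal.toReal_pos h0 hs
  calc (∫ x in s, g x ∂μ) ^ 2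
      = μ.real s ^ 2 * ((μ.real s)⁻¹ ^ 2 * (∫ x in s, g x ∂μ) ^ 2) := by field_simp
    _ ≤ μ.real s ^ 2 * ((μ.real s)⁻¹ * ∫ x in s, g x ^ 2 ∂μ) := by gcongr
    _ = μ.real s * ∫ x in s, g x ^ 2 ∂μ := by field_simp

theorem sq_sub_le_abs_mul_setIntegral_uIoc_deriv_sq {f : ℝ → ℝ} (hf : ContDiff ℝ 1 f) (x y : ℝ) :
    (f x - f y) ^ 2 ≤ |x - y| * ∫ s in Ι y x, deriv f s ^ 2 := by
  have hd : Continuous (deriv f) := hf.continuous_deriv le_rfl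
  have hftc : ∫ s in y..x, deriv f s = f x - f y :=
    intervalIntegral.integral_deriv_eq_sub
      (fun z _ => (hf.differentiable one_ne_zero).differentiableAt) (hd.intervalIntegrable y x)
  calc (f x - f y) ^ 2 = (∫ s in Ι y x, deriv f s) ^ 2 := by
        rw [← sq_abs, ← hftc, intervalIntegral.abs_integral_eq_abs_integral_uIoc, sq_abs]
    _ ≤ volume.real (Ι y x) * ∫ s in Ι y x, deriv f s ^ 2 :=
        sq_setIntegral_le_measureReal_mul_setIntegral_sq (by simp)
          hd.integrableOn_uIoc (hd.pow 2).integrableOn_uIoc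
    _ = |x - y| * ∫ s in Ι y x, deriv f s ^ 2 := by
        rw [measureReal_def, Real.volume_uIoc, ENNReal.toReal_ofReal (abs_nonneg _)]

section TailMoment

variable {μ : Measure ℝ} [IsProbabilityMeasure μ]

theorem setIntegral_prod_Ici_Iio_fst_sub_snd (hμ : Integrable id μ) (s : ℝ) :
    ∫ p in Ici s ×ˢ Iio s, (p.1 - p.2) ∂μ.prod μ = ∫ x in Ici s, (x - ∫ y, y ∂μ) ∂μ := by
  have hcompl : μ.real (Iio s) = 1 - μ.real (Ici s) := by
    rw [← compl_Ici, probReal_compl_eq_one_sub measurableSet_Ici]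
  have hmean : ∫ y in Iio s, y ∂μ = ∫ y, y ∂μ - ∫ y in Ici s, y ∂μ := by
    rw [← integral_add_compl measurableSet_Ici (f := fun y => y) hμ, compl_Ici]
    ring
  rw [← Measure.prod_restrict, integral_sub (f := fun p : ℝ × ℝ => p.1) (g := fun p => p.2)
      (hμ.integrableOn.comp_fst _) (hμ.integrableOn.comp_snd _),
    integral_fun_fst (fun x => x), integral_fun_snd (fun x => x),
    integral_sub (f := fun x => x) hμ.integrableOn (integrable_const _), setIntegral_const]
  simp only [smul_eq_mul, measureReal_restrict_apply_univ, hcompl, hmean]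
  ring

theorem setLIntegral_prod_Ici_Iio_ofReal_fst_sub_snd (hμ : Integrable id μ) (s : ℝ) :
    ∫⁻ p in Ici s ×ˢ Iio s, ENNReal.ofReal (p.1 - p.2) ∂μ.prod μ
      = ENNReal.ofReal (∫ x in Ici s, (x - ∫ y, y ∂μ) ∂μ) := by
  rw [← setIntegral_prod_Ici_Iio_fst_sub_snd hμ s, ofReal_integral_eq_lintegral_ofReal]
  · exact ((hμ.comp_fst μ).sub (hμ.comp_snd μ)).integrableOn
  · exact (ae_restrict_iff' (measurableSet_Ici.prod measurableSet_Iio)).2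
      (ae_of_all _ fun p hp => sub_nonneg.2 (hp.2.out.le.trans hp.1.out))

theorem setLIntegral_prod_mem_uIoc_ofReal_abs_sub (hμ : Integrable id μ) (s : ℝ) :
    ∫⁻ p in {p : ℝ × ℝ | s ∈ Ι p.2 p.1}, ENNReal.ofReal |p.1 - p.2| ∂μ.prod μ
      = 2 * ENNReal.ofReal (∫ x in Ici s, (x - ∫ y, y ∂μ) ∂μ) := by
  have hunion : {p : ℝ × ℝ | s ∈ Ι p.2 p.1} = Ici s ×ˢ Iio s ∪ Iio s ×ˢ Ici s := by
    ext p
    simp only [mem_ofPred_eq, mem_uIoc, mem_union, mem_prod, mem_Ici, mem_Iio]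
    tauto
  have hmeas : MeasurableSet (Ici s ×ˢ Iio s) := measurableSet_Ici.prod measurableSet_Iio
  have hdisj : Disjoint (Ici s ×ˢ Iio s) (Iio s ×ˢ Ici s) :=
    disjoint_prod.2 (Or.inl (Ici_disjoint_Iio le_rfl))
  have hswap : ∫⁻ p in Iio s ×ˢ Ici s, ENNReal.ofReal |p.1 - p.2| ∂μ.prod μ
      = ∫⁻ p in Ici s ×ˢ Iio s, ENNReal.ofReal |p.1 - p.2| ∂μ.prod μ := by
    have := (Measure.measurePreserving_swap (μ := μ) (ν := μ)).setLIntegral_comp_preimage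
      hmeas (f := fun p => ENNReal.ofReal |p.1 - p.2|) (by fun_prop)
    simpa only [preimage_swap_prod, Prod.fst_swap, Prod.snd_swap, abs_sub_comm] using this
  have habs : ∫⁻ p in Ici s ×ˢ Iio s, ENNReal.ofReal |p.1 - p.2| ∂μ.prod μ
      = ∫⁻ p in Ici s ×ˢ Iio s, ENNReal.ofReal (p.1 - p.2) ∂μ.prod μ :=
    setLIntegral_congr_fun hmeas fun p hp => by
      rw [abs_of_nonneg (sub_nonneg.2 (hp.2.out.le.trans hp.1.out))]
  rw [hunion, lintegral_union (measurableSet_Iio.prod measurableSet_Ici) hdisj, hswap, habs,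
    setLIntegral_prod_Ici_Iio_ofReal_fst_sub_snd hμ, two_mul]

theorem lintegral_prod_ofReal_abs_sub_mul_setLIntegral_uIoc (hμ : Integrable id μ)
    {g : ℝ → ℝ≥0∞} (hg : Measurable g) :
    ∫⁻ p, ENNReal.ofReal |p.1 - p.2| * (∫⁻ s in Ι p.2 p.1, g s) ∂μ.prod μ
      = 2 * ∫⁻ s, ENNReal.ofReal (∫ x in Ici s, (x - ∫ y, y ∂μ) ∂μ) * g s := by
  set S : Set ((ℝ × ℝ) × ℝ) := {z | z.2 ∈ Ι z.1.2 z.1.1}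
  have hS : MeasurableSet S := by
    simp only [S, uIoc, mem_Ioc, ofPred_and]
    exact (measurableSet_lt (by fun_prop) (by fun_prop)).inter
      (measurableSet_le (by fun_prop) (by fun_prop))
  set K : (ℝ × ℝ) × ℝ → ℝ≥0∞ := S.indicator fun z => ENNReal.ofReal |z.1.1 - z.1.2| * g z.2
  have hK : Measurable K := Measurable.indicator (by fun_prop) hS
  calc ∫⁻ p, ENNReal.ofReal |p.1 - p.2| * (∫⁻ s in Ι p.2 p.1, g s) ∂μ.prod μ
      = ∫⁻ p, (∫⁻ s, K (p, s)) ∂μ.prod μ := by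
        refine lintegral_congr fun p => ?_
        rw [← lintegral_const_mul _ hg, ← lintegral_indicator measurableSet_uIoc]
        rfl
    _ = ∫⁻ s, ∫⁻ p, K (p, s) ∂μ.prod μ := lintegral_lintegral_swap hK.aemeasurable
    _ = ∫⁻ s, (∫⁻ p in {p : ℝ × ℝ | s ∈ Ι p.2 p.1}, ENNReal.ofReal |p.1 - p.2| ∂μ.prod μ)
          * g s := by
        refine lintegral_congr fun s => ?_
        have hSs : MeasurableSet {p : ℝ × ℝ | s ∈ Ι p.2 p.1} :=
          hS.preimage (measurable_id.prodMk measurable_const)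
        rw [← lintegral_mul_const _ (by fun_prop), ← lintegral_indicator hSs]
        refine lintegral_congr fun p => ?_
        by_cases hp : s ∈ Ι p.2 p.1 <;> simp [K, S, hp]
    _ = 2 * ∫⁻ s, ENNReal.ofReal (∫ x in Ici s, (x - ∫ y, y ∂μ) ∂μ) * g s := by
        simp_rw [setLIntegral_prod_mem_uIoc_ofReal_abs_sub hμ, mul_assoc]
        exact lintegral_const_mul' _ _ ENNReal.ofNat_ne_top

theorem lintegral_prod_ofReal_sq_sub_le (hμ : Integrable id μ) {f : ℝ → ℝ}
    (hf : ContDiff ℝ 1 f) :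
    ∫⁻ p, ENNReal.ofReal ((f p.1 - f p.2) ^ 2) ∂μ.prod μ
      ≤ 2 * ∫⁻ s, ENNReal.ofReal (∫ x in Ici s, (x - ∫ y, y ∂μ) ∂μ)
          * ENNReal.ofReal (deriv f s ^ 2) := by
  have hd2 : Continuous fun s => deriv f s ^ 2 := (hf.continuous_deriv le_rfl).pow 2
  have hpointwise (p : ℝ × ℝ) : ENNReal.ofReal ((f p.1 - f p.2) ^ 2)
      ≤ ENNReal.ofReal |p.1 - p.2| * ∫⁻ s in Ι p.2 p.1, ENNReal.ofReal (deriv f s ^ 2) := by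
    rw [← ofReal_integral_eq_lintegral_ofReal hd2.integrableOn_uIoc
      (ae_of_all _ fun _ => sq_nonneg _), ← ENNReal.ofReal_mul (abs_nonneg _)]
    exact ENNReal.ofReal_le_ofReal (sq_sub_le_abs_mul_setIntegral_uIoc_deriv_sq hf p.1 p.2)
  exact (lintegral_mono hpointwise).trans_eq
    (lintegral_prod_ofReal_abs_sub_mul_setLIntegral_uIoc hμ hd2.measurable.ennreal_ofReal)

end TailMoment

theorem hasDerivAt_gaussianPDFReal (μ : ℝ) (v : ℝ≥0) (x : ℝ) :
    HasDerivAt (gaussianPDFReal μ v) (-((x - μ) / v) * gaussianPDFReal μ v x) x := by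
  have hquad : HasDerivAt (fun y => -(y - μ) ^ 2 / (2 * v)) (-((x - μ) / v)) x := by
    refine ((((hasDerivAt_id' x).sub_const μ).pow 2).neg.div_const (2 * (v : ℝ))).congr_deriv ?_
    rcases eq_or_ne (v : ℝ) 0 with hv | hv
    · simp [hv]
    · field_simp
      ring
  refine (hquad.exp.const_mul (√(2 * Real.pi * v))⁻¹).congr_deriv ?_
  simp only [gaussianPDFReal]
  ring

theorem integrable_gaussianPDFReal_mul_sub (μ : ℝ) {v : ℝ≥0} (hv : v ≠ 0) :
    Integrable fun x => gaussianPDFReal μ v x * (x - μ) := by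
  have h := ((memLp_id_gaussianReal (μ := μ) (v := v) 1).integrable le_rfl).sub
    (integrable_const μ)
  rw [gaussianReal_of_var_ne_zero μ hv, integrable_withDensity_iff_integrable_smul'
    (measurable_gaussianPDF μ v) (ae_of_all _ fun _ => gaussianPDF_lt_top)] at h
  simpa [toReal_gaussianPDF] using h

theorem setIntegral_Ici_sub_gaussianReal (μ : ℝ) {v : ℝ≥0} (hv : v ≠ 0) (s : ℝ) :
    ∫ x in Ici s, (x - μ) ∂gaussianReal μ v = v * gaussianPDFReal μ v s := by
  have hderiv : ∀ x, HasDerivAt (fun y => -(v * gaussianPDFReal μ v y))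
      (gaussianPDFReal μ v x * (x - μ)) x := fun x => by
    refine ((hasDerivAt_gaussianPDFReal μ v x).const_mul (v : ℝ)).neg.congr_deriv ?_
    field_simp
  have hint := integrable_gaussianPDFReal_mul_sub μ hv
  have hlim : Tendsto (fun y => -(v * gaussianPDFReal μ v y)) atTop (nhds 0) :=
    tendsto_zero_of_hasDerivAt_of_integrableOn_Ioi (a := s) (fun x _ => hderiv x)
      hint.integrableOn ((integrable_gaussianPDFReal μ v).const_mul _).neg.integrableOn
  rw [← integral_indicator measurableSet_Ici, integral_gaussianReal_eq_integral_smul hv]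
  simp_rw [smul_eq_mul, ← indicator_mul_right]
  rw [integral_indicator measurableSet_Ici, integral_Ici_eq_integral_Ioi,
    integral_Ioi_of_hasDerivAt_of_tendsto' (fun x _ => hderiv x) hint.integrableOn hlim]
  ring

theorem lintegral_gaussianReal_eq_lintegral_mul (μ : ℝ) {v : ℝ≥0} (hv : v ≠ 0) {g : ℝ → ℝ≥0∞}
    (hg : Measurable g) :
    ∫⁻ x, g x ∂gaussianReal μ v = ∫⁻ x, ENNReal.ofReal (gaussianPDFReal μ v x) * g x := by
  rw [gaussianReal_of_var_ne_zero μ hv,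
    lintegral_withDensity_eq_lintegral_mul _ (measurable_gaussianPDF μ v) hg]
  rfl

/-- **Gaussian Poincaré inequality.** If `Z ~ N(0,1)` and `f ∈ C¹(ℝ)` with `f, f' ∈ L²(γ)`
(`γ` the standard Gaussian measure), then `Var(f(Z)) ≤ E[(f'(Z))²]`. -/
theorem gaussian_poincare (f : ℝ → ℝ) (hf : ContDiff ℝ 1 f)
    (h1 : MemLp f 2 (gaussianReal 0 1)) (h2 : MemLp (deriv f) 2 (gaussianReal 0 1)) :
    ∫ x, f x ^ 2 ∂(gaussianReal 0 1) - (∫ x, f x ∂(gaussianReal 0 1)) ^ 2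
      ≤ ∫ x, (deriv f x) ^ 2 ∂(gaussianReal 0 1) := by
  set γ := gaussianReal 0 1
  have hg : Measurable fun s => ENNReal.ofReal (deriv f s ^ 2) :=
    ((hf.continuous_deriv le_rfl).pow 2).measurable.ennreal_ofReal
  have hlint : ∫⁻ p, ENNReal.ofReal ((f p.1 - f p.2) ^ 2) ∂γ.prod γ
      ≤ ENNReal.ofReal (2 * ∫ x, deriv f x ^ 2 ∂γ) :=
    calc ∫⁻ p, ENNReal.ofReal ((f p.1 - f p.2) ^ 2) ∂γ.prod γ
        ≤ 2 * ∫⁻ s, ENNReal.ofReal (∫ x in Ici s, (x - ∫ y, y ∂γ) ∂γ)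
            * ENNReal.ofReal (deriv f s ^ 2) :=
          lintegral_prod_ofReal_sq_sub_le ((memLp_id_gaussianReal 1).integrable le_rfl) hf
      _ = 2 * ∫⁻ s, ENNReal.ofReal (deriv f s ^ 2) ∂γ := by
          simp only [γ, integral_id_gaussianReal, setIntegral_Ici_sub_gaussianReal 0 one_ne_zero,
            NNReal.coe_one, one_mul, lintegral_gaussianReal_eq_lintegral_mul 0 one_ne_zero hg]
      _ = ENNReal.ofReal (2 * ∫ x, deriv f x ^ 2 ∂γ) := by
          rw [ENNReal.ofReal_mul zero_le_two, ENNReal.ofReal_ofNat,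
            ofReal_integral_eq_lintegral_ofReal h2.integrable_sq (ae_of_all _ fun _ => sq_nonneg _)]
  have hsq := ENNReal.toReal_le_of_le_ofReal (by positivity) hlint
  rw [← integral_eq_lintegral_of_nonneg_ae (ae_of_all _ fun _ => sq_nonneg _)
    (by fun_prop)] at hsq
  rw [integral_sq_sub_sq_integral_eq_half_integral_prod h1]
  linarith
end

section
/- Dynamic programming principle for the Hopf-Lax formula: with f(t,h) := sup_{h'≥0} (ψ(h') − (h−h')²/(8t)) where ψ is extended to be constant on (−∞,0], one has for all t, s, h ≥ 0: f(t+s,h) = sup_{h'≥0} ( f(t,h') − (h−h')²/(8s) ). -/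
open Set

/-- One Hopf-Lax step with time `s`, applied to a function `g`, evaluated at `h`:
`sup_{h'≥0} (g(h') − (h−h')²/(8s))`, with the convention that for `s = 0` it is `g(h)`. -/
noncomputable def hopfLaxStep (s : ℝ) (g : ℝ → ℝ) (h : ℝ) : ℝ :=
  if s = 0 then g h
  else sSup ((fun h' => g h' - (h - h') ^ 2 / (8 * s)) '' {h' : ℝ | 0 ≤ h'})

lemma hl_bound {ψ : ℝ → ℝ} {L : NNReal} (hψ : LipschitzWith L ψ) {t : ℝ} (ht : 0 < t)
    (h y : ℝ) : ψ y - (h - y) ^ 2 / (8 * t) ≤ ψ h + 2 * (L : ℝ) ^ 2 * t := by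
  have h1 := hψ.dist_le_mul y h
  rw [Real.dist_eq, Real.dist_eq] at h1
  have h3 : ψ y - ψ h ≤ (L : ℝ) * |y - h| := le_trans (le_abs_self _) h1
  have h4 : (0:ℝ) ≤ |y - h| := abs_nonneg _
  have h5 : (0:ℝ) ≤ (|y - h| - 4 * (L:ℝ) * t) ^ 2 := sq_nonneg _
  have h6 : |y - h| ^ 2 = (h - y) ^ 2 := by rw [sq_abs]; ring
  have h7 : (h - y) ^ 2 / (8 * t) * (8 * t) = (h - y) ^ 2 :=
    div_mul_cancel₀ _ (by positivity)
  nlinarith [ht]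

/-- **Dynamic programming principle for the Hopf-Lax formula.** With
`f(t,h) := sup_{h'≥0} (ψ(h') − (h−h')²/(8t))` (and `f(0,h) = ψ(h)`), where `ψ` is Lipschitz
and constant on `(−∞,0]`, one has for all `t, s, h ≥ 0`:
`f(t+s,h) = sup_{h'≥0} (f(t,h') − (h−h')²/(8s))`. -/
theorem hopfLax_dynamic_programming (ψ : ℝ → ℝ) (L : NNReal) (hψ : LipschitzWith L ψ)
    (hconst : ∀ x ≤ (0 : ℝ), ψ x = ψ 0)
    (t s h : ℝ) (ht : 0 ≤ t) (hs : 0 ≤ s) (hh : 0 ≤ h) :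
    hopfLaxStep (t + s) ψ h = hopfLaxStep s (fun h' => hopfLaxStep t ψ h') h := by
  rcases hs.eq_or_lt with rfl|hs'
  · simp [hopfLaxStep]
  rcases ht.eq_or_lt with rfl|ht'
  · have hfun : (fun h' => hopfLaxStep 0 ψ h') = ψ := by
      funext x; simp [hopfLaxStep]
    rw [hfun]; norm_num
  have hts : 0 < t + s := by linarith
  have hfun : (fun h' => hopfLaxStep t ψ h')
      = fun x => sSup ((fun y => ψ y - (x - y) ^ 2 / (8 * t)) '' {y : ℝ | 0 ≤ y}) := by
    funext x; simp [hopfLaxStep, ht'.ne']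
  rw [hfun, hopfLaxStep, hopfLaxStep, if_neg hts.ne', if_neg hs'.ne']
  set g : ℝ → ℝ := fun x => sSup ((fun y => ψ y - (x - y) ^ 2 / (8 * t)) '' {y : ℝ | 0 ≤ y})
    with hg
  -- inner sets
  have neI : ∀ x : ℝ, ((fun y => ψ y - (x - y) ^ 2 / (8 * t)) '' {y : ℝ | 0 ≤ y}).Nonempty :=
    fun x => ⟨_, mem_image_of_mem _ (le_refl (0:ℝ))⟩
  have bddI : ∀ x : ℝ, BddAbove ((fun y => ψ y - (x - y) ^ 2 / (8 * t)) '' {y : ℝ | 0 ≤ y}) := by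
    intro x
    refine ⟨ψ x + 2 * (L:ℝ) ^ 2 * t, ?_⟩
    rintro _ ⟨y, hy, rfl⟩
    exact hl_bound hψ ht' x y
  have gle : ∀ x : ℝ, g x ≤ ψ x + 2 * (L:ℝ) ^ 2 * t := by
    intro x
    refine csSup_le (neI x) ?_
    rintro _ ⟨y, hy, rfl⟩
    exact hl_bound hψ ht' x y
  have bddA : BddAbove ((fun y => ψ y - (h - y) ^ 2 / (8 * (t + s))) '' {y : ℝ | 0 ≤ y}) := by
    refine ⟨ψ h + 2 * (L:ℝ) ^ 2 * (t + s), ?_⟩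
    rintro _ ⟨y, hy, rfl⟩
    exact hl_bound hψ hts h y
  have bddB : BddAbove ((fun x => g x - (h - x) ^ 2 / (8 * s)) '' {x : ℝ | 0 ≤ x}) := by
    refine ⟨ψ h + 2 * (L:ℝ) ^ 2 * s + 2 * (L:ℝ) ^ 2 * t, ?_⟩
    rintro _ ⟨x, hx, rfl⟩
    have := hl_bound hψ hs' h x
    have := gle x
    simp only
    linarith
  have neA : ((fun y => ψ y - (h - y) ^ 2 / (8 * (t + s))) '' {y : ℝ | 0 ≤ y}).Nonempty :=
    ⟨_, mem_image_of_mem _ (le_refl (0:ℝ))⟩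
  have neB : ((fun x => g x - (h - x) ^ 2 / (8 * s)) '' {x : ℝ | 0 ≤ x}).Nonempty :=
    ⟨_, mem_image_of_mem _ (le_refl (0:ℝ))⟩
  apply le_antisymm
  · refine csSup_le neA ?_
    rintro _ ⟨y, hy, rfl⟩
    simp only [mem_setOf_eq] at hy
    set x : ℝ := (s * y + t * h) / (t + s) with hxdef
    have hx : 0 ≤ x := by
      apply div_nonneg _ hts.le
      nlinarith
    show ψ y - (h - y) ^ 2 / (8 * (t + s))
        ≤ sSup ((fun x => g x - (h - x) ^ 2 / (8 * s)) '' {x : ℝ | 0 ≤ x})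
    have key : ψ y - (h - y) ^ 2 / (8 * (t + s))
        = (ψ y - (x - y) ^ 2 / (8 * t)) - (h - x) ^ 2 / (8 * s) := by
      rw [hxdef]
      field_simp
      ring
    rw [key]
    have step1 : ψ y - (x - y) ^ 2 / (8 * t) ≤ g x :=
      le_csSup (bddI x) (mem_image_of_mem _ hy)
    have step2 : g x - (h - x) ^ 2 / (8 * s)
        ≤ sSup ((fun x => g x - (h - x) ^ 2 / (8 * s)) '' {x : ℝ | 0 ≤ x}) :=
      le_csSup bddB (mem_image_of_mem _ hx)
    linarith
  · refine csSup_le neB ?_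
    rintro _ ⟨x, hx, rfl⟩
    simp only [mem_setOf_eq] at hx
    simp only
    rw [sub_le_iff_le_add]
    refine csSup_le (neI x) ?_
    rintro _ ⟨y, hy, rfl⟩
    simp only [mem_setOf_eq] at hy
    have h1 : ψ y - (h - y) ^ 2 / (8 * (t + s))
        ≤ sSup ((fun y => ψ y - (h - y) ^ 2 / (8 * (t + s))) '' {y : ℝ | 0 ≤ y}) :=
      le_csSup bddA (mem_image_of_mem _ hy)
    have h2 : (h - y) ^ 2 / (8 * (t + s)) ≤ (x - y) ^ 2 / (8 * t) + (h - x) ^ 2 / (8 * s) := by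
      rw [div_add_div _ _ (by positivity : (8*t) ≠ 0) (by positivity : (8*s) ≠ 0),
        div_le_div_iff₀ (by positivity) (by positivity)]
      nlinarith [sq_nonneg (s * (x - y) - t * (h - x)), mul_pos ht' hs', hts]
    linarith
end

section
/- For the tensor inference model of order p, the difference of p-th powers identity yields: |∂_t F̄_N − 2^{p−1}(∂_h F̄_N)^p|² ≤ (C/N²) E⟨(x·x̄ − E⟨x·x̄⟩)²⟩, where C depends only on p and the bound on the support of P, using ∂_t F̄_N = (1/(2N^p)) E⟨(x·x̄)^p⟩ and ∂_h F̄_N = (1/(2N)) E⟨x·x̄⟩. -/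
open MeasureTheory

lemma abs_pow_sub_pow_le' {x y K : ℝ} (p : ℕ) (hx : |x| ≤ K) (hy : |y| ≤ K) :
    |x ^ p - y ^ p| ≤ p * K ^ (p - 1) * |x - y| := by
  have hK : 0 ≤ K := (abs_nonneg x).trans hx
  rw [← geom_sum₂_mul, abs_mul]
  have hsum : |∑ i ∈ Finset.range p, x ^ i * y ^ (p - 1 - i)| ≤ p * K ^ (p - 1) := by
    calc |∑ i ∈ Finset.range p, x ^ i * y ^ (p - 1 - i)|
        ≤ ∑ i ∈ Finset.range p, |x ^ i * y ^ (p - 1 - i)| :=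
          Finset.abs_sum_le_sum_abs _ _
      _ ≤ ∑ i ∈ Finset.range p, K ^ (p - 1) := by
          apply Finset.sum_le_sum
          intro i hi
          rw [Finset.mem_range] at hi
          rw [abs_mul, abs_pow, abs_pow]
          calc |x| ^ i * |y| ^ (p - 1 - i) ≤ K ^ i * K ^ (p - 1 - i) := by
                gcongr <;> exact abs_nonneg _
            _ = K ^ (p - 1) := by rw [← pow_add]; congr 1; omega
      _ = p * K ^ (p - 1) := by
          rw [Finset.sum_const, Finset.card_range, nsmul_eq_mul]
  exact mul_le_mul_of_nonneg_right hsum (abs_nonneg _)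

/-- **Difference of `p`-th powers bound for the tensor model.** Let `a = (x·x̄)/N ∈ [−M²,M²]`
be the overlap under the measure `E⟨·⟩` (a probability measure `μ`), and suppose
`∂_t F̄_N = (1/(2N^p)) E⟨(x·x̄)^p⟩ = (1/2) E⟨a^p⟩` and
`∂_h F̄_N = (1/(2N)) E⟨x·x̄⟩ = (1/2) E⟨a⟩`. Then
`|∂_t F̄_N − 2^{p−1}(∂_h F̄_N)^p|² ≤ p² M^{4(p−1)} E⟨(a − E⟨a⟩)²⟩`
(which equals `(C/N²) E⟨(x·x̄ − E⟨x·x̄⟩)²⟩` with `C = p² M^{4(p−1)}`). -/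
theorem tensor_power_difference_bound {Ω : Type*} [MeasurableSpace Ω]
    (μ : Measure Ω) [IsProbabilityMeasure μ]
    (p : ℕ) (hp : 1 ≤ p) (M : ℝ) (a : Ω → ℝ) (ha : Measurable a)
    (hbd : ∀ ω, |a ω| ≤ M ^ 2)
    (dtF dhF : ℝ)
    (hdt : dtF = (1 / 2) * ∫ ω, a ω ^ p ∂μ)
    (hdh : dhF = (1 / 2) * ∫ ω, a ω ∂μ) :
    |dtF - 2 ^ (p - 1) * dhF ^ p| ^ 2
      ≤ (p : ℝ) ^ 2 * M ^ (4 * (p - 1)) * ∫ ω, (a ω - ∫ ω', a ω' ∂μ) ^ 2 ∂μ := by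
  set K : ℝ := M ^ 2 with hK
  have hK0 : 0 ≤ K := sq_nonneg M
  set b : ℝ := ∫ ω, a ω ∂μ with hb
  -- integrability facts
  have hia : Integrable a μ := by
    refine Integrable.mono' (integrable_const K) ha.aestronglyMeasurable ?_
    exact Filter.Eventually.of_forall fun ω => by simpa [Real.norm_eq_abs] using hbd ω
  have hiap : Integrable (fun ω => a ω ^ p) μ := by
    refine Integrable.mono' (integrable_const (K ^ p)) (ha.pow_const p).aestronglyMeasurable ?_
    refine Filter.Eventually.of_forall fun ω => ?_
    rw [Real.norm_eq_abs, abs_pow]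
    exact pow_le_pow_left₀ (abs_nonneg _) (hbd ω) p
  have hiab : Integrable (fun ω => |a ω - b|) μ := (hia.sub (integrable_const b)).abs
  have hiab2 : Integrable (fun ω => (a ω - b) ^ 2) μ := by
    refine Integrable.mono' (integrable_const ((K + |b|) ^ 2))
      (((ha.sub measurable_const).pow_const 2).aestronglyMeasurable) ?_
    refine Filter.Eventually.of_forall fun ω => ?_
    rw [Real.norm_eq_abs, abs_pow]
    refine pow_le_pow_left₀ (abs_nonneg _) ?_ 2
    calc |a ω - b| ≤ |a ω| + |b| := abs_sub _ _
      _ ≤ K + |b| := by gcongr; exact hbd ω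
  -- bound on |b|
  have hbb : |b| ≤ K := by
    calc |b| ≤ ∫ ω, |a ω| ∂μ := by
          simpa [Real.norm_eq_abs] using norm_integral_le_integral_norm (μ := μ) a
      _ ≤ ∫ _ω, K ∂μ := integral_mono hia.abs (integrable_const K) hbd
      _ = K := by simp
  -- the difference equals (1/2)(∫ a^p − b^p)
  obtain ⟨q, rfl⟩ : ∃ q, p = q + 1 := ⟨p - 1, by omega⟩
  have hhalf : (2 : ℝ) ^ (q + 1 - 1) * ((1 / 2) * b) ^ (q + 1) = (1 / 2) * b ^ (q + 1) := by
    have h1 : ((2 : ℝ)) ^ q * (1 / 2 : ℝ) ^ q = 1 := by rw [← mul_pow]; norm_num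
    rw [mul_pow]
    have : (q + 1 - 1) = q := by omega
    rw [this, pow_succ (1 / 2 : ℝ)]
    calc (2 : ℝ) ^ q * ((1 / 2 : ℝ) ^ q * (1 / 2) * b ^ (q + 1))
        = ((2 : ℝ) ^ q * (1 / 2 : ℝ) ^ q) * ((1 / 2) * b ^ (q + 1)) := by ring
      _ = (1 / 2) * b ^ (q + 1) := by rw [h1, one_mul]
  have hdiff : dtF - 2 ^ (q + 1 - 1) * dhF ^ (q + 1)
      = (1 / 2) * ∫ ω, (a ω ^ (q + 1) - b ^ (q + 1)) ∂μ := by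
    rw [hdt, hdh, hhalf, integral_sub hiap (integrable_const _), integral_const]
    simp [mul_sub]
  -- pointwise bound and integral bound
  set I : ℝ := ∫ ω, |a ω - b| ∂μ with hI
  have hIle : |∫ ω, (a ω ^ (q + 1) - b ^ (q + 1)) ∂μ| ≤ (q + 1 : ℝ) * K ^ q * I := by
    calc |∫ ω, (a ω ^ (q + 1) - b ^ (q + 1)) ∂μ|
        ≤ ∫ ω, |a ω ^ (q + 1) - b ^ (q + 1)| ∂μ := by
          simpa [Real.norm_eq_abs] using
            norm_integral_le_integral_norm (μ := μ) (fun ω => a ω ^ (q + 1) - b ^ (q + 1))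
      _ ≤ ∫ ω, (q + 1 : ℝ) * K ^ q * |a ω - b| ∂μ := by
          refine integral_mono (hiap.sub (integrable_const _)).abs (hiab.const_mul _) ?_
          intro ω
          simpa using abs_pow_sub_pow_le' (q + 1) (hbd ω) hbb
      _ = (q + 1 : ℝ) * K ^ q * I := by rw [integral_const_mul]
  -- Jensen: I² ≤ ∫ (a−b)²
  have hJ : I ^ 2 ≤ ∫ ω, (a ω - b) ^ 2 ∂μ := by
    have hconv : ConvexOn ℝ Set.univ (fun x : ℝ => x ^ 2) := Even.convexOn_pow even_two
    have := hconv.map_integral_le (f := fun ω => |a ω - b|)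
      (continuous_pow 2).continuousOn isClosed_univ
      (Filter.Eventually.of_forall fun _ => Set.mem_univ _) hiab ?_
    · refine this.trans_eq ?_
      congr 1; funext ω; exact sq_abs _
    · have heq : ((fun x : ℝ => x ^ 2) ∘ fun ω => |a ω - b|) = fun ω => (a ω - b) ^ 2 := by
        funext ω; simp [Function.comp, sq_abs]
      rw [heq]; exact hiab2
  have hInn : 0 ≤ I := integral_nonneg fun ω => abs_nonneg _
  -- put it together
  rw [hdiff, abs_mul, mul_pow]
  have habs : |(1 / 2 : ℝ)| = 1 / 2 := by norm_num
  rw [habs]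
  have hstep : |∫ ω, (a ω ^ (q + 1) - b ^ (q + 1)) ∂μ| ^ 2
      ≤ ((q + 1 : ℝ) * K ^ q) ^ 2 * ∫ ω, (a ω - b) ^ 2 ∂μ := by
    calc |∫ ω, (a ω ^ (q + 1) - b ^ (q + 1)) ∂μ| ^ 2
        ≤ ((q + 1 : ℝ) * K ^ q * I) ^ 2 := by
          refine pow_le_pow_left₀ (abs_nonneg _) hIle 2
      _ = ((q + 1 : ℝ) * K ^ q) ^ 2 * I ^ 2 := by ring
      _ ≤ ((q + 1 : ℝ) * K ^ q) ^ 2 * ∫ ω, (a ω - b) ^ 2 ∂μ := by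
          exact mul_le_mul_of_nonneg_left hJ (sq_nonneg _)
  have hKpow : ((q + 1 : ℝ) * K ^ q) ^ 2 = ((q + 1 : ℕ) : ℝ) ^ 2 * M ^ (4 * (q + 1 - 1)) := by
    rw [mul_pow, hK, ← pow_mul, ← pow_mul]
    push_cast
    congr 2
    omega
  calc (1 / 2 : ℝ) ^ 2 * |∫ ω, (a ω ^ (q + 1) - b ^ (q + 1)) ∂μ| ^ 2
      ≤ 1 * (((q + 1 : ℝ) * K ^ q) ^ 2 * ∫ ω, (a ω - b) ^ 2 ∂μ) := by
        refine mul_le_mul (by norm_num) hstep (sq_nonneg _) zero_le_one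
    _ = ((q + 1 : ℕ) : ℝ) ^ 2 * M ^ (4 * (q + 1 - 1)) * ∫ ω, (a ω - b) ^ 2 ∂μ := by
        rw [one_mul, hKpow]
end
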